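/- arXiv:2306.08812 — 2 statements merged into one kernel-verified Lean document; each statement's English description precedes it below -/
import Mathlib

section
/- Let Ω: ℝ^p → ℝ be σ-strongly convex (σ > 0), f: ℝ^p → ℝ be μ-strongly convex (μ ≥ 0), both with L-Lipschitz Hessians, and let x_Ω = argmin Ω. Define x₀ = x_Ω − (∇²f(x_Ω) + λ_max∇²Ω(x_Ω))⁻¹∇f(x_Ω). Then ‖∇f(x₀) + λ_max∇Ω(x₀)‖ ≤ L(1 + λ_max)‖∇f(x_Ω)‖² / (2(μ + λ_max σ)²). -/
/-!
Write `F = f + λ_max Ω` and `v = x₀ - x_Ω`. Since `∇Ω(x_Ω) = 0`, the Newton equation reads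
`∇²F(x_Ω) v = -∇F(x_Ω)`, so `∇F(x₀)` is the Taylor remainder `∇F(x₀) - ∇F(x_Ω) - ∇²F(x_Ω) v`.
The Hessian of `F` is `L(1 + λ_max)`-Lipschitz, which bounds this remainder by
`L(1 + λ_max) ‖v‖² / 2`, and `F` is `(μ + λ_max σ)`-strongly convex, which bounds the step:
`(μ + λ_max σ) ‖v‖ ≤ ‖∇²F(x_Ω) v‖ = ‖∇f(x_Ω)‖`.
-/

/-- Euclidean space ℝ^p. -/
abbrev Euc (p : ℕ) := EuclideanSpace ℝ (Fin p)

open Set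

theorem norm_sub_sub_fderiv_le_of_lipschitz {E F : Type*} [NormedAddCommGroup E]
    [NormedSpace ℝ E] [NormedAddCommGroup F] [NormedSpace ℝ F] {G : E → F} {H : E → E →L[ℝ] F} {M : ℝ}
    (hG : ∀ x, HasFDerivAt G (H x) x) (hLip : ∀ x y, ‖H x - H y‖ ≤ M * ‖x - y‖) (x y : E) :
    ‖G y - G x - H x (y - x)‖ ≤ M * ‖y - x‖ ^ 2 / 2 := by
  set v := y - x
  set φ : ℝ → F := fun t => G (x + t • v) - G x - t • H x v
  have hφ : ∀ t : ℝ, HasDerivAt φ (H (x + t • v) v - H x v) t := by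
    intro t
    have hline : HasDerivAt (fun s : ℝ => x + s • v) v t := by
      simpa using ((hasDerivAt_id t).smul_const v).const_add x
    have hlin : HasDerivAt (fun s : ℝ => s • H x v) (H x v) t := by
      simpa using (hasDerivAt_id t).smul_const (H x v)
    exact (((hG _).comp_hasDerivAt t hline).sub_const (G x)).sub hlin
  have hB : ∀ t : ℝ, HasDerivAt (fun s : ℝ => M * ‖v‖ ^ 2 / 2 * s ^ 2) (M * ‖v‖ ^ 2 * t) t :=
    fun t => ((hasDerivAt_pow 2 t).const_mul _).congr_deriv (by norm_num; ring)
  have hbound : ∀ t ∈ Ico (0 : ℝ) 1, ‖H (x + t • v) v - H x v‖ ≤ M * ‖v‖ ^ 2 * t := by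
    intro t ht
    calc ‖H (x + t • v) v - H x v‖ = ‖(H (x + t • v) - H x) v‖ := rfl
      _ ≤ ‖H (x + t • v) - H x‖ * ‖v‖ := (H (x + t • v) - H x).le_opNorm v
      _ ≤ M * ‖x + t • v - x‖ * ‖v‖ := by gcongr; exact hLip _ _
      _ = M * ‖v‖ ^ 2 * t := by
        rw [add_sub_cancel_left, norm_smul, Real.norm_of_nonneg ht.1]; ring
  have := image_norm_le_of_norm_deriv_right_le_deriv_boundary
    (fun t _ => (hφ t).continuousAt.continuousWithinAt) (fun t _ => (hφ t).hasDerivWithinAt)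
    (by simp [φ]) hB hbound (right_mem_Icc.2 zero_le_one)
  simpa [φ, v] using this

theorem norm_newton_step_le {E : Type*} [NormedAddCommGroup E] [NormedSpace ℝ E]
    {G : E → E} {H : E → E →L[ℝ] E} {M m : ℝ} {x y : E}
    (hG : ∀ x, HasFDerivAt G (H x) x) (hLip : ∀ x y, ‖H x - H y‖ ≤ M * ‖x - y‖)
    (hm : 0 < m) (hH : ∀ v, m * ‖v‖ ≤ ‖H x v‖) (hstep : H x (y - x) = -G x) :
    ‖G y‖ ≤ M * ‖G x‖ ^ 2 / (2 * m ^ 2) := by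
  have htaylor := norm_sub_sub_fderiv_le_of_lipschitz hG hLip x y
  rw [hstep, sub_neg_eq_add, sub_add_cancel] at htaylor
  have hstep_le : ‖y - x‖ ≤ ‖G x‖ / m := by
    rw [le_div_iff₀ hm, mul_comm, ← norm_neg (G x), ← hstep]
    exact hH _
  rcases eq_or_ne y x with rfl | hyx
  · have hGx : G y = 0 := by simpa using hstep.symm
    simp [hGx]
  have hM : 0 ≤ M := by
    have : 0 < ‖y - x‖ ^ 2 := by positivity [sub_ne_zero.2 hyx]
    nlinarith [norm_nonneg (G y)]
  calc ‖G y‖ ≤ M * ‖y - x‖ ^ 2 / 2 := htaylor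
    _ ≤ M * (‖G x‖ / m) ^ 2 / 2 := by gcongr
    _ = M * ‖G x‖ ^ 2 / (2 * m ^ 2) := by field_simp

theorem mul_norm_le_norm_apply_of_inner_ge {E : Type*} [NormedAddCommGroup E]
    [InnerProductSpace ℝ E] {T : E →L[ℝ] E} {m : ℝ}
    (hT : ∀ v, m * ‖v‖ ^ 2 ≤ inner ℝ v (T v)) (v : E) : m * ‖v‖ ≤ ‖T v‖ := by
  rcases eq_or_ne v 0 with rfl | hv
  · simp
  have hpos : 0 < ‖v‖ := norm_pos_iff.2 hv
  have : m * ‖v‖ * ‖v‖ ≤ ‖T v‖ * ‖v‖ := by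
    nlinarith [hT v, real_inner_le_norm v (T v)]
  exact le_of_mul_le_mul_right this hpos

theorem norm_add_smul_sub_le {α β : Type*} [SeminormedAddCommGroup α] [NormedAddCommGroup β]
    [NormedSpace ℝ β] {A B : α → β} {K K' c : ℝ} (hc : 0 ≤ c)
    (hA : ∀ x y, ‖A x - A y‖ ≤ K * ‖x - y‖) (hB : ∀ x y, ‖B x - B y‖ ≤ K' * ‖x - y‖) (x y : α) :
    ‖(A x + c • B x) - (A y + c • B y)‖ ≤ (K + c * K') * ‖x - y‖ := by
  calc ‖(A x + c • B x) - (A y + c • B y)‖ = ‖(A x - A y) + c • (B x - B y)‖ := by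
        rw [smul_sub, add_sub_add_comm]
    _ ≤ ‖A x - A y‖ + c * ‖B x - B y‖ := by
        grw [norm_add_le, norm_smul, Real.norm_of_nonneg hc]
    _ ≤ K * ‖x - y‖ + c * (K' * ‖x - y‖) := by gcongr; exacts [hA x y, hB x y]
    _ = (K + c * K') * ‖x - y‖ := by ring

theorem stmt_15_general {p : ℕ} {L μ σ lammax : ℝ}
    (hμ : 0 ≤ μ) (hσ : 0 < σ) (hlammax : 0 < lammax)
    (Ω : Euc p → ℝ) (gf gΩ : Euc p → Euc p) (Hf HΩ : Euc p → (Euc p →L[ℝ] Euc p))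
    (hgΩ : ∀ x, HasGradientAt Ω (gΩ x) x)
    (hHf : ∀ x, HasFDerivAt gf (Hf x) x) (hHΩ : ∀ x, HasFDerivAt gΩ (HΩ x) x)
    (hLipHf : ∀ x y, ‖Hf x - Hf y‖ ≤ L * ‖x - y‖)
    (hLipHΩ : ∀ x y, ‖HΩ x - HΩ y‖ ≤ L * ‖x - y‖)
    (hscf : ∀ x v, μ * ‖v‖ ^ 2 ≤ @inner ℝ _ _ v (Hf x v))
    (hscΩ : ∀ x v, σ * ‖v‖ ^ 2 ≤ @inner ℝ _ _ v (HΩ x v))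
    (xΩ : Euc p) (hmin : IsMinOn Ω Set.univ xΩ)
    (x₀ : Euc p)
    (hx₀ : (Hf xΩ + lammax • HΩ xΩ) (x₀ - xΩ) = -(gf xΩ)) :
    ‖gf x₀ + lammax • gΩ x₀‖
      ≤ L * (1 + lammax) * ‖gf xΩ‖ ^ 2 / (2 * (μ + lammax * σ) ^ 2) := by
  have hgΩ_min : gΩ xΩ = 0 := by
    simpa using ((hmin.isLocalMin Filter.univ_mem).hasFDerivAt_eq_zero (hgΩ xΩ).hasFDerivAt)
  have hLip : ∀ x y, ‖(Hf x + lammax • HΩ x) - (Hf y + lammax • HΩ y)‖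
      ≤ L * (1 + lammax) * ‖x - y‖ := fun x y => by
    simpa [mul_add, mul_comm] using norm_add_smul_sub_le hlammax.le hLipHf hLipHΩ x y
  have hsc : ∀ v, (μ + lammax * σ) * ‖v‖ ^ 2 ≤ inner ℝ v ((Hf xΩ + lammax • HΩ xΩ) v) := by
    intro v
    simp only [add_apply, smul_apply, inner_add_right, inner_smul_right]
    nlinarith [hscf xΩ v, hscΩ xΩ v]
  have hnewton := norm_newton_step_le (G := fun x => gf x + lammax • gΩ x) (x := xΩ)
    (fun x => (hHf x).add ((hHΩ x).const_smul lammax)) hLip (by positivity)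
    (mul_norm_le_norm_apply_of_inner_ge hsc) (by simpa [hgΩ_min] using hx₀)
  simpa [hgΩ_min] using hnewton

/-- Initialization guarantee: with x_Ω = argmin Ω (so ∇Ω(x_Ω) = 0) and the Newton step
x₀ = x_Ω − (∇²f(x_Ω) + λ_max∇²Ω(x_Ω))⁻¹∇f(x_Ω), we have
‖∇f(x₀) + λ_max∇Ω(x₀)‖ ≤ L(1+λ_max)‖∇f(x_Ω)‖² / (2(μ + λ_max σ)²). -/
theorem stmt_15 {p : ℕ} {L μ σ lammax : ℝ}
    (hμ : 0 ≤ μ) (hσ : 0 < σ) (hlammax : 0 < lammax)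
    (f Ω : Euc p → ℝ) (gf gΩ : Euc p → Euc p) (Hf HΩ : Euc p → (Euc p →L[ℝ] Euc p))
    (hgf : ∀ x, HasGradientAt f (gf x) x) (hgΩ : ∀ x, HasGradientAt Ω (gΩ x) x)
    (hHf : ∀ x, HasFDerivAt gf (Hf x) x) (hHΩ : ∀ x, HasFDerivAt gΩ (HΩ x) x)
    (hLipHf : ∀ x y, ‖Hf x - Hf y‖ ≤ L * ‖x - y‖)
    (hLipHΩ : ∀ x y, ‖HΩ x - HΩ y‖ ≤ L * ‖x - y‖)
    (hscf : ∀ x v, μ * ‖v‖ ^ 2 ≤ @inner ℝ _ _ v (Hf x v))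
    (hscΩ : ∀ x v, σ * ‖v‖ ^ 2 ≤ @inner ℝ _ _ v (HΩ x v))
    (xΩ : Euc p) (hmin : IsMinOn Ω Set.univ xΩ)
    (x₀ : Euc p)
    (hx₀ : (Hf xΩ + lammax • HΩ xΩ) (x₀ - xΩ) = -(gf xΩ)) :
    ‖gf x₀ + lammax • gΩ x₀‖
      ≤ L * (1 + lammax) * ‖gf xΩ‖ ^ 2 / (2 * (μ + lammax * σ) ^ 2) :=
  stmt_15_general hμ hσ hlammax Ω gf gΩ Hf HΩ hgΩ hHf hHΩ hLipHf hLipHΩ hscf hscΩ xΩ hmin x₀ hx₀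
end

section
/- Suppose f, Ω: ℝ^p → ℝ have L-Lipschitz Hessians and, for points x_k, x_{k+1} with λ ∈ [λ_{k+1}, λ_k] ⊂ (0, ∞) and x = αx_k + (1−α)x_{k+1} where α = (λ − λ_{k+1})/(λ_k − λ_{k+1}), the interpolated gradient error satisfies: ‖λ∇Ω(x) − αλ_k∇Ω(x_k) − (1−α)λ_{k+1}∇Ω(x_{k+1})‖ ≤ (λL/8)‖x_{k+1} − x_k‖² + ((λ_k − λ_{k+1})/4)·‖∇Ω(x_{k+1}) − ∇Ω(x_k)‖. -/
theorem smul_interpolation_decomp {M : Type*} [AddCommGroup M] [Module ℝ M]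
    {α μ ν : ℝ} (a b c : M) :
    (α * μ + (1 - α) * ν) • a - (α * μ) • b - ((1 - α) * ν) • c
      = (α * μ + (1 - α) * ν) • (a - α • b - (1 - α) • c) + (α * (1 - α) * (μ - ν)) • (c - b) := by
  module

section

variable {E F : Type*} [NormedAddCommGroup E] [NormedSpace ℝ E]
  [NormedAddCommGroup F] [NormedSpace ℝ F] {g : E → F} {H : E → E →L[ℝ] F} {L : ℝ}

/-- The remainder `g (x + t • d) - g x - t • H x d` has derivative `(H (x + t • d) - H x) d`,
of norm at most `L t ‖d‖²`; comparing with `L t² ‖d‖² / 2` gives the constant `1/2`. -/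
theorem norm_sub_sub_fderiv_le_of_lipschitz_fderiv (hH : ∀ x, HasFDerivAt g (H x) x)
    (hLip : ∀ x y, ‖H x - H y‖ ≤ L * ‖x - y‖) (x y : E) :
    ‖g y - g x - H x (y - x)‖ ≤ L / 2 * ‖y - x‖ ^ 2 := by
  set d := y - x
  let r : ℝ → F := fun t => g (x + t • d) - g x - t • H x d
  have hr : ∀ t, HasDerivAt r ((H (x + t • d) - H x) d) t := fun t => by
    have hline : HasDerivAt (fun t : ℝ => x + t • d) d t := by
      simpa using ((hasDerivAt_id t).smul_const d).const_add x
    exact ((((hH _).comp_hasDerivAt t hline).sub_const (g x)).sub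
      ((hasDerivAt_id t).smul_const (H x d))).congr_deriv (by simp)
  have hbound : ∀ t ∈ Set.Ico (0 : ℝ) 1, ‖(H (x + t • d) - H x) d‖ ≤ L * t * ‖d‖ ^ 2 :=
    fun t ht => calc
      ‖(H (x + t • d) - H x) d‖ ≤ L * ‖x + t • d - x‖ * ‖d‖ :=
        (ContinuousLinearMap.le_opNorm _ _).trans (by gcongr; exact hLip _ _)
      _ = L * t * ‖d‖ ^ 2 := by
        rw [add_sub_cancel_left, norm_smul, Real.norm_of_nonneg ht.1]; ring
  have hB : ∀ t : ℝ, HasDerivAt (fun t => L / 2 * t ^ 2 * ‖d‖ ^ 2) (L * t * ‖d‖ ^ 2) t :=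
    fun t => (((hasDerivAt_pow 2 t).const_mul (L / 2)).mul_const (‖d‖ ^ 2)).congr_deriv
      (by simp only [Nat.cast_ofNat, Nat.reduceSub, pow_one]; ring)
  have := image_norm_le_of_norm_deriv_right_le_deriv_boundary (f := r)
    (fun t _ => (hr t).continuousAt.continuousWithinAt) (fun t _ => (hr t).hasDerivWithinAt)
    (by simp [r]) hB hbound (Set.right_mem_Icc.2 zero_le_one)
  simpa [r, d] using this

theorem norm_apply_convexComb_sub_le_of_lipschitz_fderiv (hH : ∀ x, HasFDerivAt g (H x) x)
    (hLip : ∀ x y, ‖H x - H y‖ ≤ L * ‖x - y‖) {α : ℝ} (hα0 : 0 ≤ α) (hα1 : α ≤ 1) (x y : E) :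
    ‖g (α • x + (1 - α) • y) - α • g x - (1 - α) • g y‖ ≤ α * (1 - α) * (L / 2) * ‖y - x‖ ^ 2 := by
  set z := α • x + (1 - α) • y
  have hx : ‖x - z‖ = (1 - α) * ‖y - x‖ := by
    rw [show x - z = (1 - α) • (x - y) by module, norm_smul, Real.norm_of_nonneg (by linarith),
      norm_sub_rev]
  have hy : ‖y - z‖ = α * ‖y - x‖ := by
    rw [show y - z = α • (y - x) by module, norm_smul, Real.norm_of_nonneg hα0]
  have ex := norm_sub_sub_fderiv_le_of_lipschitz_fderiv hH hLip z x
  have ey := norm_sub_sub_fderiv_le_of_lipschitz_fderiv hH hLip z y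
  rw [hx] at ex
  rw [hy] at ey
  -- the first-order terms cancel since `α • (x - z) + (1 - α) • (y - z) = 0`
  have hlin : α • H z (x - z) + (1 - α) • H z (y - z) = 0 := by
    rw [← map_smul, ← map_smul, ← map_add, show α • (x - z) + (1 - α) • (y - z) = 0 by module,
      map_zero]
  have hsplit : g z - α • g x - (1 - α) • g y
      = -(α • (g x - g z - H z (x - z)) + (1 - α) • (g y - g z - H z (y - z))) := by
    linear_combination (norm := module) -hlin
  calc ‖g z - α • g x - (1 - α) • g y‖
      ≤ α * ‖g x - g z - H z (x - z)‖ + (1 - α) * ‖g y - g z - H z (y - z)‖ := by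
        rw [hsplit, norm_neg]
        refine (norm_add_le _ _).trans_eq ?_
        rw [norm_smul, norm_smul, Real.norm_of_nonneg hα0, Real.norm_of_nonneg (by linarith)]
    _ ≤ α * (L / 2 * ((1 - α) * ‖y - x‖) ^ 2) + (1 - α) * (L / 2 * (α * ‖y - x‖) ^ 2) := by
        gcongr
    _ = α * (1 - α) * (L / 2) * ‖y - x‖ ^ 2 := by ring

theorem norm_weighted_interpolation_sub_le (hH : ∀ x, HasFDerivAt g (H x) x) (hLip : ∀ x y, ‖H x - H y‖ ≤ L * ‖x - y‖)
    {α μ ν lam : ℝ} (hα0 : 0 ≤ α) (hα1 : α ≤ 1) (hνμ : ν ≤ μ)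
    (hlam : lam = α * μ + (1 - α) * ν) (hlam0 : 0 ≤ lam) (x y : E) :
    ‖lam • g (α • x + (1 - α) • y) - (α * μ) • g x - ((1 - α) * ν) • g y‖
      ≤ lam * L / 8 * ‖y - x‖ ^ 2 + (μ - ν) / 4 * ‖g y - g x‖ := by
  have hinterp := norm_apply_convexComb_sub_le_of_lipschitz_fderiv hH hLip hα0 hα1 x y
  have hquarter : α * (1 - α) ≤ 1 / 4 := by nlinarith [sq_nonneg (2 * α - 1)]
  have hLd : 0 ≤ L * ‖y - x‖ ^ 2 := by
    nlinarith [(norm_nonneg (H y - H x)).trans (hLip y x), norm_nonneg (y - x)]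
  subst hlam
  rw [smul_interpolation_decomp]
  calc _ ≤ _ := norm_add_le _ _
    _ = (α * μ + (1 - α) * ν) * ‖g (α • x + (1 - α) • y) - α • g x - (1 - α) • g y‖
        + α * (1 - α) * (μ - ν) * ‖g y - g x‖ := by
      rw [norm_smul, norm_smul, Real.norm_of_nonneg hlam0,
        Real.norm_of_nonneg
          (mul_nonneg (mul_nonneg hα0 (sub_nonneg.2 hα1)) (sub_nonneg.2 hνμ))]
    _ ≤ (α * μ + (1 - α) * ν) * (1 / 4 * (L / 2) * ‖y - x‖ ^ 2)
        + 1 / 4 * (μ - ν) * ‖g y - g x‖ := by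
      gcongr
      exact hinterp.trans (by nlinarith [mul_le_mul_of_nonneg_right hquarter hLd])
    _ = _ := by ring

end

theorem stmt_19_general {p : ℕ} {L lamk lamk1 lam : ℝ}
    (gΩ : Euc p → Euc p) (HΩ : Euc p → (Euc p →L[ℝ] Euc p))
    (hHΩ : ∀ x, HasFDerivAt gΩ (HΩ x) x)
    (hLipHΩ : ∀ x y, ‖HΩ x - HΩ y‖ ≤ L * ‖x - y‖)
    (hlamk1 : 0 < lamk1) (hlt : lamk1 < lamk) (hlam : lam ∈ Set.Icc lamk1 lamk)
    (xk xk1 : Euc p) :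
    ‖lam • gΩ (((lam - lamk1) / (lamk - lamk1)) • xk
          + (1 - (lam - lamk1) / (lamk - lamk1)) • xk1)
        - (((lam - lamk1) / (lamk - lamk1)) * lamk) • gΩ xk
        - ((1 - (lam - lamk1) / (lamk - lamk1)) * lamk1) • gΩ xk1‖
      ≤ lam * L / 8 * ‖xk1 - xk‖ ^ 2 + (lamk - lamk1) / 4 * ‖gΩ xk1 - gΩ xk‖ := by
  obtain ⟨hlamk1_le, hle_lamk⟩ := hlam
  have hgap : 0 < lamk - lamk1 := sub_pos.2 hlt
  have hα0 : 0 ≤ (lam - lamk1) / (lamk - lamk1) := div_nonneg (by linarith) hgap.le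
  have hα1 : (lam - lamk1) / (lamk - lamk1) ≤ 1 := (div_le_one hgap).2 (by linarith)
  have hlam_eq : lam = (lam - lamk1) / (lamk - lamk1) * lamk
      + (1 - (lam - lamk1) / (lamk - lamk1)) * lamk1 := by
    field_simp
    ring
  exact norm_weighted_interpolation_sub_le hHΩ hLipHΩ hα0 hα1 hlt.le hlam_eq (by linarith) xk xk1

/-- Interpolation error for the regularizer term: with α = (λ−λ_{k+1})/(λ_k−λ_{k+1}),
x = αx_k + (1−α)x_{k+1}, and Ω having an L-Lipschitz Hessian,
‖λ∇Ω(x) − αλ_k∇Ω(x_k) − (1−α)λ_{k+1}∇Ω(x_{k+1})‖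
  ≤ (λL/8)‖x_{k+1}−x_k‖² + ((λ_k−λ_{k+1})/4)‖∇Ω(x_{k+1})−∇Ω(x_k)‖. -/
theorem stmt_19 {p : ℕ} {L lamk lamk1 lam : ℝ}
    (f Ω : Euc p → ℝ) (gf gΩ : Euc p → Euc p) (Hf HΩ : Euc p → (Euc p →L[ℝ] Euc p))
    (hgf : ∀ x, HasGradientAt f (gf x) x) (hgΩ : ∀ x, HasGradientAt Ω (gΩ x) x)
    (hHf : ∀ x, HasFDerivAt gf (Hf x) x) (hHΩ : ∀ x, HasFDerivAt gΩ (HΩ x) x)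
    (hLipHf : ∀ x y, ‖Hf x - Hf y‖ ≤ L * ‖x - y‖)
    (hLipHΩ : ∀ x y, ‖HΩ x - HΩ y‖ ≤ L * ‖x - y‖)
    (hlamk1 : 0 < lamk1) (hlt : lamk1 < lamk) (hlam : lam ∈ Set.Icc lamk1 lamk)
    (xk xk1 : Euc p) :
    ‖lam • gΩ (((lam - lamk1) / (lamk - lamk1)) • xk
          + (1 - (lam - lamk1) / (lamk - lamk1)) • xk1)
        - (((lam - lamk1) / (lamk - lamk1)) * lamk) • gΩ xk
        - ((1 - (lam - lamk1) / (lamk - lamk1)) * lamk1) • gΩ xk1‖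
      ≤ lam * L / 8 * ‖xk1 - xk‖ ^ 2 + (lamk - lamk1) / 4 * ‖gΩ xk1 - gΩ xk‖ :=
  stmt_19_general gΩ HΩ hHΩ hLipHΩ hlamk1 hlt hlam xk xk1
end
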